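/- Let n and m be positive integers, let W be a linear subspace of ℚⁿ, and let E = {−1,1}ⁿ ⊆ ℚⁿ. Suppose E = E₁ ⊔ E₂ ⊔ ⋯ ⊔ E_m is a partition of E such that each part E_i is contained in some coset of W, such that E₁ = −E₂ (i.e., E₁ is the pointwise negation of E₂), and such that E₁ is not contained in W. Let η ∈ {1, −1} and suppose λ : E → ℚ satisfies: the sum of λ(ε) over ε ∈ E₁ equals 1, the sum of λ(ε) over ε ∈ E₂ equals η, and the sum of λ(ε) over ε ∈ E_i equals 0 for every i > 2. Then there exist rational numbers a₁, …, aₙ such that: Σ_{k=1}^{n} Σ_{ε ∈ E₁} λ(ε) ε_k a_k = 1, Σ_{k=1}^{n} Σ_{ε ∈ E₂} λ(ε) ε_k a_k = −η, and Σ_{k=1}^{n} Σ_{ε ∈ E_i} λ(ε) ε_k a_k = 0 for every i > 2. -/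

import Mathlib

/-!
Choose `ε₀ ∈ P 0 \ W` and a linear functional `f` on `ℚⁿ` that vanishes on `W` with
`f ε₀ = 1`, and put `a k := f (e_k)`. Then `Σ_k ε_k a_k = f ε` for every `ε`, and `f` is
constant on each coset of `W`: it is `1` on `P 0`, `-1` on `P 1 = -P 0`, and some constant on
every other part. The double sum over a part is that constant times the total weight of `λ` on
it, which gives `1`, `-η` and `0`.
-/

theorem Submodule.exists_le_ker_apply_eq_one {K V : Type*} [Field K] [AddCommGroup V]
    [Module K V] {p : Submodule K V} {v : V} (hv : v ∉ p) :
    ∃ f : V →ₗ[K] K, p ≤ LinearMap.ker f ∧ f v = 1 := by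
  obtain ⟨f, hpf, hfv⟩ := LinearMap.exists_extend_of_notMem (0 : p →ₗ[K] K) hv 1
  exact ⟨f, fun x hx => by simpa using congr($hpf ⟨x, hx⟩), hfv⟩

theorem LinearMap.apply_eq_of_sub_mem_ker {R M : Type*} [Ring R] [AddCommGroup M] [Module R M]
    {p : Submodule R M} {f : M →ₗ[R] R} (hpf : p ≤ LinearMap.ker f) {x v : M} (hx : x - v ∈ p) :
    f x = f v :=
  sub_eq_zero.mp (by simpa using hpf hx)

theorem Set.finite_setOf_forall_eq_one_or_eq_neg_one {ι R : Type*} [Finite ι] [Ring R] :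
    {ε : ι → R | ∀ k, ε k = 1 ∨ ε k = -1}.Finite :=
  Set.Finite.pi' fun _ => Set.toFinite ({1, -1} : Set R)

theorem LinearMap.sum_mul_apply_single {ι R : Type*} [Fintype ι] [DecidableEq ι] [CommRing R]
    (f : (ι → R) →ₗ[R] R) (x : ι → R) : ∑ k, x k * f (Pi.single k 1) = f x := by
  rw [f.pi_apply_eq_sum_univ x]
  refine Finset.sum_congr rfl fun k _ => ?_
  rw [smul_eq_mul]
  congr 2
  funext j
  simp [Pi.single_apply, eq_comm]

theorem sum_finsum_mem_mul_apply_single {ι R : Type*} [Fintype ι] [DecidableEq ι] [CommRing R]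
    (f : (ι → R) →ₗ[R] R) {S : Set (ι → R)} (hS : S.Finite) {c : R}
    (hfS : ∀ ε ∈ S, f ε = c) (lam : (ι → R) → R) :
    ∑ k, ∑ᶠ ε ∈ S, lam ε * ε k * f (Pi.single k 1) = c * ∑ᶠ ε ∈ S, lam ε := by
  simp only [finsum_mem_eq_finite_toFinset_sum _ hS]
  rw [Finset.sum_comm, Finset.mul_sum]
  refine Finset.sum_congr rfl fun ε hε => ?_
  simp only [mul_assoc, ← Finset.mul_sum, f.sum_mul_apply_single, hfS ε (hS.mem_toFinset.mp hε),
    mul_comm]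

/-- The cube linear algebra lemma (Lemma 4.8 of the paper). Let `W ⊆ ℚⁿ` be a linear
subspace and let `P 0 ⊔ P 1 ⊔ ⋯ ⊔ P (m-1)` be a partition of the cube
`E = {±1}ⁿ ⊆ ℚⁿ` such that each part is contained in a coset of `W`, the part `P 1`
is the pointwise negation of `P 0`, and `P 0` is not contained in `W`. If
`λ : E → ℚ` has sum `1` over `P 0`, sum `η = ±1` over `P 1`, and sum `0` over each
other part, then there are rationals `a 1, …, a n` with
`Σ_k Σ_{ε ∈ P i} λ(ε) ε_k a_k` equal to `1`, `-η`, `0` for `i = 0`, `i = 1`, `i ≥ 2`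
respectively. -/
theorem cube_linear_algebra
    (n m : ℕ) (hm : 2 ≤ m)
    (W : Submodule ℚ (Fin n → ℚ))
    (P : Fin m → Set (Fin n → ℚ))
    (hUnion : (⋃ i, P i) = {ε : Fin n → ℚ | ∀ k, ε k = 1 ∨ ε k = -1})
    (hCoset : ∀ i : Fin m, ∃ v : Fin n → ℚ, P i ⊆ {x | x - v ∈ W})
    (hNeg : P ⟨1, by omega⟩ = (fun x : Fin n → ℚ => -x) '' P ⟨0, by omega⟩)
    (hNotW : ¬ P ⟨0, by omega⟩ ⊆ (W : Set (Fin n → ℚ)))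
    (η : ℚ)
    (lam : (Fin n → ℚ) → ℚ)
    (hSum0 : ∑ᶠ ε ∈ P ⟨0, by omega⟩, lam ε = 1)
    (hSum1 : ∑ᶠ ε ∈ P ⟨1, by omega⟩, lam ε = η)
    (hSumRest : ∀ i : Fin m, 2 ≤ (i : ℕ) → ∑ᶠ ε ∈ P i, lam ε = 0) :
    ∃ a : Fin n → ℚ,
      (∑ k : Fin n, ∑ᶠ ε ∈ P ⟨0, by omega⟩, lam ε * ε k * a k) = 1 ∧
      (∑ k : Fin n, ∑ᶠ ε ∈ P ⟨1, by omega⟩, lam ε * ε k * a k) = -η ∧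
      (∀ i : Fin m, 2 ≤ (i : ℕ) →
        (∑ k : Fin n, ∑ᶠ ε ∈ P i, lam ε * ε k * a k) = 0) := by
  obtain ⟨ε₀, hε₀P, hε₀W⟩ := Set.not_subset.mp hNotW
  obtain ⟨f, hWf, hfε₀⟩ := W.exists_le_ker_apply_eq_one hε₀W
  have hsum (i : Fin m) {v : Fin n → ℚ} (hv : P i ⊆ {x | x - v ∈ W}) :
      ∑ k, ∑ᶠ ε ∈ P i, lam ε * ε k * f (Pi.single k 1) = f v * ∑ᶠ ε ∈ P i, lam ε :=
    sum_finsum_mem_mul_apply_single f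
      (Set.finite_setOf_forall_eq_one_or_eq_neg_one.subset (hUnion ▸ Set.subset_iUnion P i))
      (fun ε hε => LinearMap.apply_eq_of_sub_mem_ker hWf (hv hε)) lam
  refine ⟨fun k => f (Pi.single k 1), ?_, ?_, fun i hi => ?_⟩
  · obtain ⟨v, hv⟩ := hCoset _
    rw [hsum _ hv, hSum0, ← LinearMap.apply_eq_of_sub_mem_ker hWf (hv hε₀P), hfε₀, one_mul]
  · obtain ⟨v, hv⟩ := hCoset _
    have hε₀neg : -ε₀ ∈ P ⟨1, by omega⟩ := hNeg ▸ ⟨ε₀, hε₀P, rfl⟩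
    rw [hsum _ hv, hSum1, ← LinearMap.apply_eq_of_sub_mem_ker hWf (hv hε₀neg), map_neg, hfε₀,
      neg_one_mul]
  · obtain ⟨v, hv⟩ := hCoset i
    rw [hsum i hv, hSumRest i hi, mul_zero]
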